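/- Let Z be a measurable space and let μ₁, μ₂, μ₃ be probability measures on Z × ℝ with Z-marginals ν₁, ν₂, ν₃. For a measurable h : Z → ℝ define R_{μ}(h) := ∫ |h(z) − y| dμ(z,y), and for h, h' define R_{ν}(h,h') := ∫ |h(z) − h'(z)| dν(z). Let H be a set of measurable functions Z → ℝ, let F be a set of measurable functions Z → ℝ that is closed under negation and contains z ↦ |h(z) − h'(z)| for all h, h' ∈ H, and define d_F(ν, ν') := sup_{f ∈ F} (∫ f dν − ∫ f dν'). Assume all risks are finite, all relevant integrands are integrable, and the suprema defining d_F(ν₁,ν₂) and d_F(ν₂,ν₃) are finite. Suppose h* ∈ H attains min_{h∈H} (R_{μ₂}(h) + R_{μ₃}(h)) and set λ := R_{μ₂}(h*) + R_{μ₃}(h*). Then for every h ∈ H, R_{μ₂}(h) ≤ R_{μ₃}(h) + 2·d_F(ν₁, ν₂) + d_F(ν₂, ν₃) + λ. -/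

import Mathlib

open MeasureTheory

/-- Generalization risk with absolute loss: `R_μ(h) = ∫ |h(z) - y| dμ(z,y)`. -/
noncomputable def risk {Z : Type*} [MeasurableSpace Z]
    (μ : Measure (Z × ℝ)) (h : Z → ℝ) : ℝ :=
  ∫ p, |h p.1 - p.2| ∂μ

/-- Pair risk with absolute loss over the input marginal:
`R_ν(h, h') = ∫ |h(z) - h'(z)| dν(z)`. -/
noncomputable def pairRisk {Z : Type*} [MeasurableSpace Z]
    (ν : Measure Z) (h h' : Z → ℝ) : ℝ :=
  ∫ z, |h z - h' z| ∂ν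

/-- Discrepancy over a function class `F`:
`d_F(ν, ν') = sup_{f ∈ F} (∫ f dν - ∫ f dν')`. -/
noncomputable def discrepancy {Z : Type*} [MeasurableSpace Z]
    (F : Set (Z → ℝ)) (ν ν' : Measure Z) : ℝ :=
  sSup ((fun f => (∫ z, f z ∂ν) - ∫ z, f z ∂ν') '' F)

/- Two triangle inequalities for `|·|` around one discrepancy step:
`R_{μ₂}(h) ≤ R_{μ₂}(h*) + R_{ν₂}(h, h*) ≤ R_{μ₂}(h*) + R_{ν₃}(h, h*) + d_F(ν₂, ν₃)
≤ R_{μ₂}(h*) + R_{μ₃}(h) + R_{μ₃}(h*) + d_F(ν₂, ν₃)`. The term `2·d_F(ν₁, ν₂)` is slack: a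
discrepancy over a class closed under negation is nonnegative (also where `sSup` takes its
junk value `0`). -/

lemma sSup_nonneg_of_forall_neg_mem {s : Set ℝ} (hs : ∀ x ∈ s, -x ∈ s) : 0 ≤ sSup s := by
  obtain rfl | ⟨x, hx⟩ := s.eq_empty_or_nonempty
  · exact Real.sSup_empty.ge
  · rcases le_total 0 x with hx₀ | hx₀
    · exact Real.sSup_nonneg' ⟨x, hx, hx₀⟩
    · exact Real.sSup_nonneg' ⟨-x, hs x hx, neg_nonneg.2 hx₀⟩

section Discrepancy

variable {Z : Type*} [MeasurableSpace Z] {F : Set (Z → ℝ)} {ν ν' : Measure Z}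

lemma discrepancy_nonneg (hF : ∀ f ∈ F, (fun z => -(f z)) ∈ F) : 0 ≤ discrepancy F ν ν' := by
  refine sSup_nonneg_of_forall_neg_mem ?_
  rintro _ ⟨f, hf, rfl⟩
  exact ⟨_, hF f hf, by simp only [integral_neg]; ring⟩

lemma integral_sub_integral_le_discrepancy {f : Z → ℝ} (hf : f ∈ F)
    (hbdd : BddAbove ((fun f => (∫ z, f z ∂ν) - ∫ z, f z ∂ν') '' F)) :
    (∫ z, f z ∂ν) - ∫ z, f z ∂ν' ≤ discrepancy F ν ν' :=
  le_csSup hbdd ⟨f, hf, rfl⟩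

lemma pairRisk_le_pairRisk_add_discrepancy {h h' : Z → ℝ} (hF : (fun z => |h z - h' z|) ∈ F)
    (hbdd : BddAbove ((fun f => (∫ z, f z ∂ν) - ∫ z, f z ∂ν') '' F)) :
    pairRisk ν h h' ≤ pairRisk ν' h h' + discrepancy F ν ν' := by
  have := integral_sub_integral_le_discrepancy hF hbdd
  rw [pairRisk, pairRisk]
  linarith

end Discrepancy

section Marginal

variable {Z : Type*} [MeasurableSpace Z] {μ : Measure (Z × ℝ)} {h h' : Z → ℝ}

lemma pairRisk_map_fst (hm : AEStronglyMeasurable (fun z => |h z - h' z|) (μ.map Prod.fst)) :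
    pairRisk (μ.map Prod.fst) h h' = ∫ p, |h p.1 - h' p.1| ∂μ :=
  integral_map measurable_fst.aemeasurable hm

lemma risk_le_risk_add_pairRisk (hh' : Integrable (fun p : Z × ℝ => |h' p.1 - p.2|) μ)
    (hhh' : Integrable (fun z => |h z - h' z|) (μ.map Prod.fst)) :
    risk μ h ≤ risk μ h' + pairRisk (μ.map Prod.fst) h h' := by
  have hhh'_fst : Integrable (fun p : Z × ℝ => |h p.1 - h' p.1|) μ :=
    hhh'.comp_aemeasurable measurable_fst.aemeasurable
  calc risk μ h ≤ ∫ p, (|h' p.1 - p.2| + |h p.1 - h' p.1|) ∂μ :=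
        integral_mono_of_nonneg (.of_forall fun _ => abs_nonneg _) (hh'.add hhh'_fst)
          (.of_forall fun p => (abs_sub_le _ (h' p.1) _).trans_eq (add_comm _ _))
    _ = risk μ h' + pairRisk (μ.map Prod.fst) h h' := by
        rw [integral_add hh' hhh'_fst, pairRisk_map_fst hhh'.aestronglyMeasurable, risk]

lemma pairRisk_map_fst_le_risk_add_risk (hh : Integrable (fun p : Z × ℝ => |h p.1 - p.2|) μ)
    (hh' : Integrable (fun p : Z × ℝ => |h' p.1 - p.2|) μ)
    (hm : AEStronglyMeasurable (fun z => |h z - h' z|) (μ.map Prod.fst)) :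
    pairRisk (μ.map Prod.fst) h h' ≤ risk μ h + risk μ h' := by
  calc pairRisk (μ.map Prod.fst) h h' = ∫ p, |h p.1 - h' p.1| ∂μ := pairRisk_map_fst hm
    _ ≤ ∫ p, (|h p.1 - p.2| + |h' p.1 - p.2|) ∂μ :=
        integral_mono_of_nonneg (.of_forall fun _ => abs_nonneg _) (hh.add hh')
          (.of_forall fun p => (abs_sub_le _ p.2 _).trans_eq (by rw [abs_sub_comm p.2]))
    _ = risk μ h + risk μ h' := integral_add hh hh'

end Marginal

theorem cfr_bound_proof_inequality_general
    {Z : Type*} [MeasurableSpace Z]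
    (μ₂ μ₃ : Measure (Z × ℝ))
    (ν₁ ν₂ ν₃ : Measure Z)
    (hν₂ : ν₂ = μ₂.map Prod.fst)
    (hν₃ : ν₃ = μ₃.map Prod.fst)
    (H : Set (Z → ℝ))
    (F : Set (Z → ℝ))
    (hFneg : ∀ f ∈ F, (fun z => -(f z)) ∈ F)
    (hFpair : ∀ h ∈ H, ∀ h' ∈ H, (fun z => |h z - h' z|) ∈ F)
    (hint₂ : ∀ h ∈ H, Integrable (fun p : Z × ℝ => |h p.1 - p.2|) μ₂)
    (hint₃ : ∀ h ∈ H, Integrable (fun p : Z × ℝ => |h p.1 - p.2|) μ₃)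
    (hpint₂ : ∀ h ∈ H, ∀ h' ∈ H, Integrable (fun z => |h z - h' z|) ν₂)
    (hpint₃ : ∀ h ∈ H, ∀ h' ∈ H, Integrable (fun z => |h z - h' z|) ν₃)
    (hbdd₂₃ : BddAbove ((fun f => (∫ z, f z ∂ν₂) - ∫ z, f z ∂ν₃) '' F))
    (hstar : Z → ℝ) (hstar_mem : hstar ∈ H)
    (lam : ℝ) (hlam : lam = risk μ₂ hstar + risk μ₃ hstar) :
    ∀ h ∈ H, risk μ₂ h ≤ risk μ₃ h +
      2 * discrepancy F ν₁ ν₂ + discrepancy F ν₂ ν₃ + lam := by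
  intro h hh
  subst hν₂ hν₃ hlam
  have h_risk₂ := risk_le_risk_add_pairRisk (hint₂ hstar hstar_mem) (hpint₂ h hh hstar hstar_mem)
  have h_shift := pairRisk_le_pairRisk_add_discrepancy (hFpair h hh hstar hstar_mem) hbdd₂₃
  have h_pair₃ := pairRisk_map_fst_le_risk_add_risk (hint₃ h hh) (hint₃ hstar hstar_mem)
    (hpint₃ h hh hstar hstar_mem).aestronglyMeasurable
  have h_slack : 0 ≤ discrepancy F ν₁ (μ₂.map Prod.fst) := discrepancy_nonneg hFneg
  linarith

/-- The inequality established in the appendix proof of Theorem 1 (CFR Bound):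
for `h* ∈ H` minimizing `R_{μ₂} + R_{μ₃}` and `λ = R_{μ₂}(h*) + R_{μ₃}(h*)`,
every `h ∈ H` satisfies
`R_{μ₂}(h) ≤ R_{μ₃}(h) + 2·d_F(ν₁,ν₂) + d_F(ν₂,ν₃) + λ`. -/
theorem cfr_bound_proof_inequality
    {Z : Type*} [MeasurableSpace Z]
    (μ₁ μ₂ μ₃ : Measure (Z × ℝ))
    [IsProbabilityMeasure μ₁] [IsProbabilityMeasure μ₂] [IsProbabilityMeasure μ₃]
    (ν₁ ν₂ ν₃ : Measure Z)
    (hν₁ : ν₁ = μ₁.map Prod.fst) (hν₂ : ν₂ = μ₂.map Prod.fst)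
    (hν₃ : ν₃ = μ₃.map Prod.fst)
    (H : Set (Z → ℝ))
    (hHmeas : ∀ h ∈ H, Measurable h)
    (F : Set (Z → ℝ)) (hFmeas : ∀ f ∈ F, Measurable f)
    (hFneg : ∀ f ∈ F, (fun z => -(f z)) ∈ F)
    (hFpair : ∀ h ∈ H, ∀ h' ∈ H, (fun z => |h z - h' z|) ∈ F)
    (hint₁ : ∀ h ∈ H, Integrable (fun p : Z × ℝ => |h p.1 - p.2|) μ₁)
    (hint₂ : ∀ h ∈ H, Integrable (fun p : Z × ℝ => |h p.1 - p.2|) μ₂)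
    (hint₃ : ∀ h ∈ H, Integrable (fun p : Z × ℝ => |h p.1 - p.2|) μ₃)
    (hpint₁ : ∀ h ∈ H, ∀ h' ∈ H, Integrable (fun z => |h z - h' z|) ν₁)
    (hpint₂ : ∀ h ∈ H, ∀ h' ∈ H, Integrable (fun z => |h z - h' z|) ν₂)
    (hpint₃ : ∀ h ∈ H, ∀ h' ∈ H, Integrable (fun z => |h z - h' z|) ν₃)
    (hbdd₁₂ : BddAbove ((fun f => (∫ z, f z ∂ν₁) - ∫ z, f z ∂ν₂) '' F))
    (hbdd₂₃ : BddAbove ((fun f => (∫ z, f z ∂ν₂) - ∫ z, f z ∂ν₃) '' F))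
    (hstar : Z → ℝ) (hstar_mem : hstar ∈ H)
    (hstar_min : ∀ h ∈ H, risk μ₂ hstar + risk μ₃ hstar ≤ risk μ₂ h + risk μ₃ h)
    (lam : ℝ) (hlam : lam = risk μ₂ hstar + risk μ₃ hstar) :
    ∀ h ∈ H, risk μ₂ h ≤ risk μ₃ h +
      2 * discrepancy F ν₁ ν₂ + discrepancy F ν₂ ν₃ + lam :=
  cfr_bound_proof_inequality_general μ₂ μ₃ ν₁ ν₂ ν₃ hν₂ hν₃ H F hFneg hFpair hint₂ hint₃ hpint₂
    hpint₃ hbdd₂₃ hstar hstar_mem lam hlam
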